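/- Let R be a coupling. Suppose σ₀, σ₁ are states (maps from variables to finite partial maps Index ⇀ V containing [] in their domains) with σ₀ [State(R)] σ₁, and T₀, T₁ : Index ⇀ V are tensors with T₀ [Tensor†(R)] T₁. Then for any variable x, σ₀[x : T₀] [State(R)] σ₁[x : T₁], where σ[x : T] is the state mapping x to the update of σ(x) by T (defined at i by T(i) if i ∈ dom(T), undefined if i ∈ dom(T)↑ \ dom(T), and σ(x)(i) otherwise) and mapping every other variable y to σ(y). -/

import Mathlib

/-- An index: a finite sequence of string-integer pairs with no repeated string. -/
def Index : Type := {l : List (String × ℤ) // (l.map Prod.fst).Nodup}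

/-- The prefix order on indices. -/
def Index.pre (i j : Index) : Prop := i.1 <+: j.1

/-- The empty index. -/
def emptyIdx : Index := ⟨[], by simp⟩

/-- Downward closure of a single index. -/
def down (k : Index) : Set Index := {i | Index.pre i k}

/-- Downward closure of a set of indices. -/
def downSet (L : Set Index) : Set Index := {j | ∃ l ∈ L, Index.pre j l}

/-- Upward closure of a set of indices. -/
def upSet (L : Set Index) : Set Index := {j | ∃ l ∈ L, Index.pre l j}

/-- `m` is the ⊑-greatest element of `S`. -/
def greatestIn (S : Set Index) (m : Index) : Prop := m ∈ S ∧ ∀ s ∈ S, Index.pre s m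

/-- Domain of a partial map represented as an `Option`-valued function. -/
def pdom {V : Type*} (f : Index → Option V) : Set Index := {i | f i ≠ none}

open Classical in
/-- `extend(f)(i) = f(max(dom f ∩ i↓))` when the maximum exists; undefined otherwise. -/
noncomputable def extendFun {V : Type*} (f : Index → Option V) (i : Index) : Option V :=
  if h : ∃ m, greatestIn (pdom f ∩ down i) m then f h.choose else none

open Classical in
/-- The update of `f` by `T`: `T i` on `dom T`, undefined on `(dom T)↑ \ dom T`,
`f i` otherwise. -/
noncomputable def updateMap {V : Type*} (f T : Index → Option V) : Index → Option V :=
  fun i => if i ∈ pdom T then T i else if i ∈ upSet (pdom T) then none else f i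

/-- Pointwise sum of two real tensors. -/
def oplus (T T' : Index → Option ℝ) : Index → Option ℝ := fun i =>
  match T i, T' i with
  | some a, some b => some (a + b)
  | some a, none => some a
  | none, some b => some b
  | none, none => none

/-- A coupling: a partial bijection on indices that agrees on shared strings. -/
def Coupling (R : Index → Index → Prop) : Prop :=
  (∀ i₀ i₁ j, R i₀ j → R i₁ j → i₀ = i₁) ∧
  (∀ i j₀ j₁, R i j₀ → R i j₁ → j₀ = j₁) ∧
  (∀ i₀ i₁, R i₀ i₁ → ∀ (α : String) (v₀ v₁ : ℤ),
    (α, v₀) ∈ i₀.1 → (α, v₁) ∈ i₁.1 → v₀ = v₁)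

/-- The relation `P(R)` on sets of indices induced by a coupling `R`. -/
def PRel (R : Index → Index → Prop) (L₀ L₁ : Set Index) : Prop :=
  ∀ i₀ i₁, R i₀ i₁ →
    ((i₀ ∈ upSet L₀ ↔ i₁ ∈ upSet L₁) ∧
     (i₀ ∈ upSet L₀ → ∃ m₀ m₁, greatestIn (L₀ ∩ down i₀) m₀ ∧
        greatestIn (L₁ ∩ down i₁) m₁ ∧ R m₀ m₁))

/-- The relation `[R ⇀ Δ_V]` / `Tensor_V(R)` on partial maps. -/
def TensorRel {V : Type*} (R : Index → Index → Prop) (T₀ T₁ : Index → Option V) : Prop :=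
  ∀ i₀ i₁, R i₀ i₁ →
    ((i₀ ∈ pdom T₀ ↔ i₁ ∈ pdom T₁) ∧ (i₀ ∈ pdom T₀ → T₀ i₀ = T₁ i₁))

/-- The relation `Tensor†_V(R)` on partial maps (via `extend`). -/
def TensorDagRel {V : Type*} (R : Index → Index → Prop) (T₀ T₁ : Index → Option V) : Prop :=
  ∀ i₀ i₁, R i₀ i₁ →
    ((i₀ ∈ upSet (pdom T₀) ↔ i₁ ∈ upSet (pdom T₁)) ∧
     (i₀ ∈ upSet (pdom T₀) → extendFun T₀ i₀ = extendFun T₁ i₁))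

/-- A well-formed state: each variable stores a finite partial map containing `[]`
in its domain. -/
def WFState {Var V : Type*} (σ : Var → Index → Option V) : Prop :=
  ∀ y, (pdom (σ y)).Finite ∧ emptyIdx ∈ pdom (σ y)

/-- The relation `State(R)` on states. -/
def StateRel {Var V : Type*} (R : Index → Index → Prop)
    (σ₀ σ₁ : Var → Index → Option V) : Prop :=
  ∀ x, TensorDagRel R (σ₀ x) (σ₁ x)

/-- The state update `σ[x : T]`. -/
noncomputable def updState {Var V : Type*} [DecidableEq Var]
    (σ : Var → Index → Option V) (x : Var) (T : Index → Option V) :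
    Var → Index → Option V :=
  fun y => if y = x then updateMap (σ y) T else σ y

/-- An antichain of indices: no two distinct elements are ⊑-comparable. -/
def IsAntichainIdx (A : Set Index) : Prop :=
  ∀ i ∈ A, ∀ j ∈ A, Index.pre i j → i = j

/-!
Below a fixed index `i`, the update `updateMap f T` looks like `T` when `dom T` meets `i↓`, and
like `f` otherwise: in the first case the greatest element of `dom T ∩ i↓` stays greatest in the
updated domain, because the update erases everything in `(dom T)↑ \ dom T`. Since `i↓` is a finite
chain, such greatest elements always exist. `Tensor†(R)` for `T₀, T₁` puts related indices in the
same case, which is then settled by `Tensor†(R)` for the tensors or `State(R)` for the states.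
-/

lemma Index.pre_refl (i : Index) : i.pre i := List.prefix_refl _

lemma Index.pre_antisymm {i j : Index} (h : i.pre j) (h' : j.pre i) : i = j :=
  Subtype.ext (h.eq_of_length (h.length_le.antisymm h'.length_le))

lemma Index.pre_total_of_pre {s t i : Index} (hs : s.pre i) (ht : t.pre i) :
    s.pre t ∨ t.pre s :=
  List.prefix_or_prefix_of_prefix hs ht

lemma down_finite (i : Index) : (down i).Finite :=
  (i.1.inits.finite_toSet.preimage Subtype.val_injective.injOn).subset
    fun _ hs => (List.mem_inits _ _).2 hs

lemma mem_upSet_iff_nonempty_inter_down {L : Set Index} {i : Index} :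
    i ∈ upSet L ↔ (L ∩ down i).Nonempty :=
  Iff.rfl

lemma greatestIn_unique {S : Set Index} {m m' : Index}
    (h : greatestIn S m) (h' : greatestIn S m') : m = m' :=
  Index.pre_antisymm (h'.2 m h.1) (h.2 m' h'.1)

lemma exists_greatestIn_of_subset_down {S : Set Index} {i : Index} (hsub : S ⊆ down i)
    (hne : S.Nonempty) : ∃ m, greatestIn S m := by
  obtain ⟨m, hmS, hmax⟩ :=
    ((down_finite i).subset hsub).exists_maximalFor (fun j => j.1.length) S hne
  refine ⟨m, hmS, fun s hs => ?_⟩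
  rcases Index.pre_total_of_pre (hsub hs) (hsub hmS) with hsm | hms
  · exact hsm
  · have hlen : m.1.length = s.1.length := hms.length_le.antisymm (hmax hs hms.length_le)
    rw [Subtype.ext (hms.eq_of_length hlen)]
    exact Index.pre_refl s

lemma extendFun_eq_of_greatestIn {V : Type*} {f : Index → Option V} {i m : Index}
    (hm : greatestIn (pdom f ∩ down i) m) : extendFun f i = f m := by
  have hex : ∃ m, greatestIn (pdom f ∩ down i) m := ⟨m, hm⟩
  rw [extendFun, dif_pos hex, greatestIn_unique hex.choose_spec hm]

lemma pdom_inter_down_eq_of_eqOn {V : Type*} {f g : Index → Option V} {i : Index}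
    (hfg : Set.EqOn f g (down i)) : pdom f ∩ down i = pdom g ∩ down i := by
  ext s
  simp only [Set.mem_inter_iff, pdom, Set.mem_ofPred_eq, and_congr_left_iff]
  intro hs
  rw [hfg hs]

lemma mem_upSet_pdom_congr {V : Type*} {f g : Index → Option V} {i : Index}
    (hfg : Set.EqOn f g (down i)) : i ∈ upSet (pdom f) ↔ i ∈ upSet (pdom g) := by
  simp only [mem_upSet_iff_nonempty_inter_down, pdom_inter_down_eq_of_eqOn hfg]

lemma extendFun_congr {V : Type*} {f g : Index → Option V} {i : Index}
    (hfg : Set.EqOn f g (down i)) : extendFun f i = extendFun g i := by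
  have hdom := pdom_inter_down_eq_of_eqOn hfg
  by_cases hex : ∃ m, greatestIn (pdom f ∩ down i) m
  · obtain ⟨m, hm⟩ := hex
    rw [extendFun_eq_of_greatestIn hm, extendFun_eq_of_greatestIn (hdom ▸ hm), hfg hm.1.2]
  · rw [extendFun, extendFun, dif_neg hex, dif_neg (hdom ▸ hex)]

lemma updateMap_of_mem_pdom {V : Type*} {f T : Index → Option V} {i : Index}
    (hi : i ∈ pdom T) : updateMap f T i = T i :=
  if_pos hi

lemma updateMap_of_not_mem_upSet {V : Type*} {f T : Index → Option V} {i : Index}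
    (hi : i ∉ upSet (pdom T)) : updateMap f T i = f i := by
  have hiT : i ∉ pdom T := fun h => hi ⟨i, h, Index.pre_refl i⟩
  rw [updateMap, if_neg hiT, if_neg hi]

lemma eqOn_down_updateMap_of_not_mem_upSet {V : Type*} {f T : Index → Option V} {i : Index}
    (hi : i ∉ upSet (pdom T)) : Set.EqOn (updateMap f T) f (down i) :=
  fun _ hs => updateMap_of_not_mem_upSet fun ⟨t, ht, hts⟩ => hi ⟨t, ht, hts.trans hs⟩

lemma greatestIn_pdom_updateMap {V : Type*} {f T : Index → Option V} {i m : Index}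
    (hm : greatestIn (pdom T ∩ down i) m) :
    greatestIn (pdom (updateMap f T) ∩ down i) m := by
  have hmT : m ∈ pdom T := hm.1.1
  refine ⟨⟨by simpa [pdom, updateMap_of_mem_pdom hmT] using hmT, hm.1.2⟩, fun s hs => ?_⟩
  by_cases hsT : s ∈ pdom T
  · exact hm.2 s ⟨hsT, hs.2⟩
  by_cases hsUp : s ∈ upSet (pdom T)
  · exact absurd (by rw [updateMap, if_neg hsT, if_pos hsUp]) hs.1
  · -- `m ⊑ s` is impossible, as it would put `s` in `(dom T)↑`.
    exact (Index.pre_total_of_pre hs.2 hm.1.2).resolve_right fun hms => hsUp ⟨m, hmT, hms⟩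

lemma mem_upSet_pdom_updateMap {V : Type*} {f T : Index → Option V} {i : Index}
    (hi : i ∈ upSet (pdom T)) : i ∈ upSet (pdom (updateMap f T)) := by
  obtain ⟨m, hm⟩ := exists_greatestIn_of_subset_down Set.inter_subset_right
    (mem_upSet_iff_nonempty_inter_down.1 hi)
  exact ⟨m, (greatestIn_pdom_updateMap hm).1⟩

lemma extendFun_updateMap_of_mem_upSet {V : Type*} {f T : Index → Option V} {i : Index}
    (hi : i ∈ upSet (pdom T)) : extendFun (updateMap f T) i = extendFun T i := by
  obtain ⟨m, hm⟩ := exists_greatestIn_of_subset_down Set.inter_subset_right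
    (mem_upSet_iff_nonempty_inter_down.1 hi)
  rw [extendFun_eq_of_greatestIn (greatestIn_pdom_updateMap hm), extendFun_eq_of_greatestIn hm,
    updateMap_of_mem_pdom hm.1.1]

lemma TensorDagRel.updateMap {V : Type*} {R : Index → Index → Prop}
    {f₀ f₁ T₀ T₁ : Index → Option V} (hf : TensorDagRel R f₀ f₁) (hT : TensorDagRel R T₀ T₁) :
    TensorDagRel R (updateMap f₀ T₀) (updateMap f₁ T₁) := by
  intro i₀ i₁ hi
  obtain ⟨hTiff, hText⟩ := hT i₀ i₁ hi
  by_cases h₀ : i₀ ∈ upSet (pdom T₀)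
  · have h₁ := hTiff.1 h₀
    refine ⟨iff_of_true (mem_upSet_pdom_updateMap h₀) (mem_upSet_pdom_updateMap h₁), fun _ => ?_⟩
    rw [extendFun_updateMap_of_mem_upSet h₀, extendFun_updateMap_of_mem_upSet h₁]
    exact hText h₀
  · have h₁ : i₁ ∉ upSet (pdom T₁) := mt hTiff.2 h₀
    have e₀ := eqOn_down_updateMap_of_not_mem_upSet (f := f₀) h₀
    have e₁ := eqOn_down_updateMap_of_not_mem_upSet (f := f₁) h₁
    obtain ⟨hfiff, hfext⟩ := hf i₀ i₁ hi
    rw [mem_upSet_pdom_congr e₀, mem_upSet_pdom_congr e₁, extendFun_congr e₀, extendFun_congr e₁]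
    exact ⟨hfiff, hfext⟩

theorem stmt12_general {Var V : Type*} [DecidableEq Var]
    (R : Index → Index → Prop)
    (σ₀ σ₁ : Var → Index → Option V)
    (hs : StateRel R σ₀ σ₁) (T₀ T₁ : Index → Option V)
    (hT : TensorDagRel R T₀ T₁) (x : Var) :
    StateRel R (updState σ₀ x T₀) (updState σ₁ x T₁) := by
  intro y
  by_cases hyx : y = x
  · simp only [updState, if_pos hyx]
    exact (hs y).updateMap hT
  · simp only [updState, if_neg hyx]
    exact hs y

theorem stmt12 {Var V : Type*} [DecidableEq Var]
    (R : Index → Index → Prop) (hR : Coupling R)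
    (σ₀ σ₁ : Var → Index → Option V) (hw₀ : WFState σ₀) (hw₁ : WFState σ₁)
    (hs : StateRel R σ₀ σ₁) (T₀ T₁ : Index → Option V)
    (hT₀ : (pdom T₀).Finite) (hT₁ : (pdom T₁).Finite)
    (hT : TensorDagRel R T₀ T₁) (x : Var) :
    StateRel R (updState σ₀ x T₀) (updState σ₁ x T₁) :=
  stmt12_general R σ₀ σ₁ hs T₀ T₁ hT x
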